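/- Let g be an invertible 3×3 real symmetric matrix, g8 an invertible 8×8 real symmetric matrix, and c, ω ∈ ℝ with s := 1 + c·ω > 0. Then M_hat(g, g8, c, ω) = M_check(s^(4/3)·g, s^(−2/3)·g8, s·c, ω/s). Thus the two orderings of the 3-form factor and the trivector factor in the generalised vielbein are related by this field redefinition, so the hatted and checked frames describe the same generalised metric. -/

import Mathlib

open Matrix

/-- The hatted-frame generalised metric, with both a 3-form c and a trivector ω. -/
noncomputable def Mhat (g : Matrix (Fin 3) (Fin 3) ℝ) (g8 : Matrix (Fin 8) (Fin 8) ℝ)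
    (c ω : ℝ) : Matrix ((Fin 3 ⊕ Fin 3) ⊕ Fin 8) ((Fin 3 ⊕ Fin 3) ⊕ Fin 8) ℝ :=
  |g.det * g8.det| ^ (-(1 : ℝ) / 2) •
    fromBlocks
      (fromBlocks (((1 + c * ω) ^ 2 + c ^ 2 / g.det) • g)
        (((1 + c * ω) * ω + c / g.det) • g)
        (((1 + c * ω) * ω + c / g.det) • g)
        ((ω ^ 2 + 1 / g.det) • g))
      0 0 g8

/-- The checked-frame generalised metric, with both a 3-form c and a trivector ω. -/
noncomputable def Mcheck (g : Matrix (Fin 3) (Fin 3) ℝ) (g8 : Matrix (Fin 8) (Fin 8) ℝ)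
    (c ω : ℝ) : Matrix ((Fin 3 ⊕ Fin 3) ⊕ Fin 8) ((Fin 3 ⊕ Fin 3) ⊕ Fin 8) ℝ :=
  |g.det * g8.det| ^ (-(1 : ℝ) / 2) •
    fromBlocks
      (fromBlocks ((1 + c ^ 2 / g.det) • g)
        ((ω + c * (1 + c * ω) / g.det) • g)
        ((ω + c * (1 + c * ω) / g.det) • g)
        ((ω ^ 2 + (1 + c * ω) ^ 2 / g.det) • g))
      0 0 g8

/-!
Both metrics have the shape `|det g · det g8|^(-1/2) • blockMetric A B D g g8`. Under
`g ↦ s^(4/3) g`, `g8 ↦ s^(-2/3) g8` the conformal prefactor picks up `s^(2/3)`, which exactly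
cancels the rescaling of `g8` and turns the rescaling of `g` into an overall `s²` on the
`g`-blocks. Since `c' ω' = c ω`, the checked-frame coefficients with `det g' = s⁴ det g` then
collapse to the hatted-frame ones.
-/

section BlockMetric

variable {R m n : Type*} [CommRing R]

def blockMetric (A B D : R) (g : Matrix m m R) (g8 : Matrix n n R) :
    Matrix ((m ⊕ m) ⊕ n) ((m ⊕ m) ⊕ n) R :=
  fromBlocks (fromBlocks (A • g) (B • g) (B • g) (D • g)) 0 0 g8

theorem smul_blockMetric_smul (r a b A B D : R) (g : Matrix m m R) (g8 : Matrix n n R) :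
    r • blockMetric A B D (a • g) (b • g8) =
      blockMetric (r * a * A) (r * a * B) (r * a * D) g ((r * b) • g8) := by
  simp only [blockMetric, fromBlocks_smul, smul_zero, smul_smul]
  ring_nf

end BlockMetric

theorem Mhat_eq_smul_blockMetric (g : Matrix (Fin 3) (Fin 3) ℝ) (g8 : Matrix (Fin 8) (Fin 8) ℝ)
    (c ω : ℝ) :
    Mhat g g8 c ω = |g.det * g8.det| ^ (-(1 : ℝ) / 2) •
      blockMetric ((1 + c * ω) ^ 2 + c ^ 2 / g.det) ((1 + c * ω) * ω + c / g.det)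
        (ω ^ 2 + 1 / g.det) g g8 :=
  rfl

theorem Mcheck_eq_smul_blockMetric (g : Matrix (Fin 3) (Fin 3) ℝ)
    (g8 : Matrix (Fin 8) (Fin 8) ℝ) (c ω : ℝ) :
    Mcheck g g8 c ω = |g.det * g8.det| ^ (-(1 : ℝ) / 2) •
      blockMetric (1 + c ^ 2 / g.det) (ω + c * (1 + c * ω) / g.det)
        (ω ^ 2 + (1 + c * ω) ^ 2 / g.det) g g8 :=
  rfl

section RpowSmul

variable {ι κ : Type*} [Fintype ι] [DecidableEq ι] [Fintype κ] [DecidableEq κ]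

theorem det_rpow_smul {s : ℝ} (hs : 0 < s) (a : ℝ) (g : Matrix ι ι ℝ) :
    (s ^ a • g).det = s ^ (Fintype.card ι * a) * g.det := by
  rw [det_smul, ← Real.rpow_natCast, ← Real.rpow_mul hs.le, mul_comm a]

theorem abs_det_rpow_smul_mul_rpow {s : ℝ} (hs : 0 < s) (a b : ℝ)
    (g : Matrix ι ι ℝ) (h : Matrix κ κ ℝ) :
    |(s ^ a • g).det * (s ^ b • h).det| ^ (-(1 : ℝ) / 2) =
      s ^ (-(Fintype.card ι * a + Fintype.card κ * b) / 2) * |g.det * h.det| ^ (-(1 : ℝ) / 2) := by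
  have hprod : (s ^ a • g).det * (s ^ b • h).det =
      s ^ (Fintype.card ι * a + Fintype.card κ * b) * (g.det * h.det) := by
    rw [det_rpow_smul hs, det_rpow_smul hs, Real.rpow_add hs]
    ring
  rw [hprod, abs_mul, abs_of_pos (Real.rpow_pos_of_pos hs _),
    Real.mul_rpow (Real.rpow_nonneg hs.le _) (abs_nonneg _), ← Real.rpow_mul hs.le]
  ring_nf

end RpowSmul

theorem stmt_7_general (g : Matrix (Fin 3) (Fin 3) ℝ) (g8 : Matrix (Fin 8) (Fin 8) ℝ)
    (c ω : ℝ) (hs : 0 < 1 + c * ω) :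
    Mhat g g8 c ω =
      Mcheck ((1 + c * ω) ^ ((4 : ℝ) / 3) • g) ((1 + c * ω) ^ (-(2 : ℝ) / 3) • g8)
        ((1 + c * ω) * c) (ω / (1 + c * ω)) := by
  set s := 1 + c * ω with hs_def
  have hs0 : s ≠ 0 := hs.ne'
  have hcω : 1 + s * c * (ω / s) = s := by
    rw [mul_comm s c, mul_assoc, mul_div_cancel₀ ω hs0]
  have hdet : (s ^ ((4 : ℝ) / 3) • g).det = s ^ 4 * g.det := by
    rw [det_rpow_smul hs, ← Real.rpow_natCast]
    norm_num
  have hg_scale : s ^ ((2 : ℝ) / 3) * s ^ ((4 : ℝ) / 3) = s ^ 2 := by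
    rw [← Real.rpow_add hs, ← Real.rpow_natCast]
    norm_num
  have hg8_scale : s ^ ((2 : ℝ) / 3) * s ^ (-(2 : ℝ) / 3) = 1 := by
    rw [← Real.rpow_add hs]
    norm_num
  have hpref : |(s ^ ((4 : ℝ) / 3) • g).det * (s ^ (-(2 : ℝ) / 3) • g8).det| ^ (-(1 : ℝ) / 2) =
      |g.det * g8.det| ^ (-(1 : ℝ) / 2) * s ^ ((2 : ℝ) / 3) := by
    rw [abs_det_rpow_smul_mul_rpow hs, mul_comm]
    norm_num
  rw [Mhat_eq_smul_blockMetric, Mcheck_eq_smul_blockMetric, ← hs_def, hpref, hcω, hdet, mul_smul,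
    smul_blockMetric_smul, hg_scale, hg8_scale, one_smul]
  congr 2 <;> field_simp

/-- For invertible symmetric g (3×3) and g8 (8×8) and c, ω ∈ ℝ with s := 1 + c·ω > 0,
the hatted-frame generalised metric equals the checked-frame one with
g → s^(4/3)·g, g8 → s^(−2/3)·g8, c → s·c, ω → ω/s. -/
theorem stmt_7 (g : Matrix (Fin 3) (Fin 3) ℝ) (g8 : Matrix (Fin 8) (Fin 8) ℝ)
    (hg : g.IsSymm) (hgdet : g.det ≠ 0) (hg8 : g8.IsSymm) (hg8det : g8.det ≠ 0)
    (c ω : ℝ) (hs : 0 < 1 + c * ω) :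
    Mhat g g8 c ω =
      Mcheck ((1 + c * ω) ^ ((4 : ℝ) / 3) • g) ((1 + c * ω) ^ (-(2 : ℝ) / 3) • g8)
        ((1 + c * ω) * c) (ω / (1 + c * ω)) :=
  stmt_7_general g g8 c ω hs
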